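/- For real q > 1 and positive integers r, s with real t such that all series converge, the q-Tornheim sum T[r,s,t] := Σ_{u,v≥1} q^{(r+t−1)u+(s+t−1)v}/([u]_q^r [v]_q^s [u+v]_q^t) equals Σ_{a=0}^{r-1} Σ_{b=0}^{r-1-a} C(a+s-1; a, b) (1−q)^b ζ_q[s+t+a, r−a−b] + Σ_{a=0}^{s-1} Σ_{b=0}^{s-1-a} C(a+r-1; a, b) (1−q)^b ζ_q[r+t+a, s−a−b] − Σ_{j=1}^{min(r,s)} C(r+s−j−1; r−j, s−j) (1−q)^j φ[r+s+t−j], where ζ_q[p, w] := Σ_{m>n≥1} q^{(p−1)m} q^{(w−1)n}/([m]_q^p [n]_q^w) and φ[w] := Σ_{n≥1} (n−1) q^{(w−1)n}/[n]_q^w. -/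

import Mathlib

/-!
Put `x = q^u/[u]_q`, `y = q^v/[v]_q`, `z = q^{u+v}/[u+v]_q` and `c = 1 - q`. Then
`1/[n]_q = q^n/[n]_q + c` and `x y = z (x + y + c)`. In any commutative ring this relation expands
`x^r y^s` into monomials `z^k x^l (x + c)`, `z^k y^l (y + c)` and `c^j z^k`: with
`(r, s) = (m + 1, n + 1)`, both sides satisfy
`P(m+1, n+1) = z P(m+1, n) + z P(m, n+1) + c z P(m, n)` and agree for `m = 0` or `n = 0`,
and the coefficients solving this recurrence are those of `z^{n+1} (1 + cX)^n / (1 - zX)^{n+1}`.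
Multiplied by `z^t q^{-(u+v)}` and summed over `u, v ≥ 1`, the three kinds of monomials sum to
the double q-zeta values and to `φ`; the last ones depend on `u + v` only, which is how the
weight `n - 1` in `φ` arises.
-/

/-- The q-analog of a natural number: `[n]_q = (q^n - 1)/(q - 1)`. -/
noncomputable def qa (q : ℝ) (n : ℕ) : ℝ := (q ^ n - 1) / (q - 1)

/-- The double q-zeta value `ζ_q[p, w] = Σ_{m>n≥1} q^{(p-1)m + (w-1)n} / ([m]_q^p [n]_q^w)`,
with `p` real and `w` a positive integer. -/
noncomputable def qzeta (q : ℝ) (p : ℝ) (w : ℕ) : ℝ :=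
  ∑' (i : ℕ) (j : ℕ),
    q ^ ((p - 1) * ((i : ℝ) + (j : ℝ) + 2) + ((w : ℝ) - 1) * ((j : ℝ) + 1)) /
      (qa q (i + j + 2) ^ p * qa q (j + 1) ^ w)

/-- `φ[w] = Σ_{n≥1} (n-1) q^{(w-1)n} / [n]_q^w`. -/
noncomputable def qphi (q : ℝ) (w : ℝ) : ℝ :=
  ∑' n : ℕ, (n : ℝ) * q ^ ((w - 1) * ((n : ℝ) + 1)) / qa q (n + 1) ^ w

open Finset PowerSeries

lemma summable_of_le_geometric_add {f : ℕ × ℕ → ℝ} {ρ C : ℝ} (hρ₀ : 0 ≤ ρ) (hρ₁ : ρ < 1)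
    (hf : ∀ p, 0 ≤ f p) (hle : ∀ p, f p ≤ C * ρ ^ (p.1 + p.2)) : Summable f := by
  have hg := summable_geometric_of_lt_one hρ₀ hρ₁
  refine Summable.of_nonneg_of_le hf hle ?_
  simpa only [pow_add] using
    (hg.mul_of_nonneg hg (fun _ => by positivity) (fun _ => by positivity)).mul_left C

lemma HasSum.succ_nsmul_of_comp_add {α : Type*} [AddCommGroup α] [UniformSpace α]
    [IsUniformAddGroup α] [CompleteSpace α] [T2Space α] {f : ℕ → α} {a : α}
    (h : HasSum (fun p : ℕ × ℕ => f (p.1 + p.2)) a) : HasSum (fun n => (n + 1) • f n) a := by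
  convert h.tsum_fiberwise (fun p : ℕ × ℕ => p.1 + p.2) using 2 with n
  have hfib : (fun p : ℕ × ℕ => p.1 + p.2) ⁻¹' {n} = ↑(antidiagonal n) := by
    ext p; simp
  rw [tsum_congr (fun b : ((fun p : ℕ × ℕ => p.1 + p.2) ⁻¹' {n}) => congrArg f b.2), tsum_const,
    Nat.card_coe_set_eq, hfib, Set.ncard_coe_finset, Nat.card_antidiagonal]

section PartialFractions

variable {R : Type*} [CommRing R]

-- `binomSeries c n = (1 + cX)^n` and `negBinomSeries z n = (1 - zX)^{-(n+1)}`; in particular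
-- `negBinomSeries x 0` is the geometric series `1/(1 - xX)`.
noncomputable def binomSeries (c : R) (n : ℕ) : R⟦X⟧ := mk fun b => (n.choose b : R) * c ^ b

noncomputable def negBinomSeries (z : R) (n : ℕ) : R⟦X⟧ :=
  mk fun a => ((a + n).choose a : R) * z ^ a

@[simp] lemma coeff_binomSeries (c : R) (n b : ℕ) :
    coeff b (binomSeries c n) = (n.choose b : R) * c ^ b := coeff_mk _ _

@[simp] lemma coeff_negBinomSeries (z : R) (n a : ℕ) :
    coeff a (negBinomSeries z n) = ((a + n).choose a : R) * z ^ a := coeff_mk _ _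

@[simp] lemma constantCoeff_binomSeries (c : R) (n : ℕ) : constantCoeff (binomSeries c n) = 1 := by
  simp [binomSeries]

@[simp] lemma constantCoeff_negBinomSeries (z : R) (n : ℕ) :
    constantCoeff (negBinomSeries z n) = 1 := by
  simp [negBinomSeries]

lemma binomSeries_zero (c : R) : binomSeries c 0 = 1 := by
  ext (_ | b) <;> simp [coeff_one]

lemma binomSeries_succ (c : R) (n : ℕ) :
    binomSeries c (n + 1) = (1 + C c * X) * binomSeries c n := by
  ext (_ | b)
  · simp
  · simp only [coeff_binomSeries, Nat.choose_succ_succ, Nat.cast_add, pow_succ, add_mul, one_mul,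
      mul_assoc, map_add, coeff_C_mul, coeff_succ_X_mul]
    ring

lemma one_sub_mul_negBinomSeries_zero (z : R) : (1 - C z * X) * negBinomSeries z 0 = 1 := by
  ext (_ | a)
  · simp
  · simp only [sub_mul, one_mul, mul_assoc, map_sub, coeff_negBinomSeries, add_zero,
      Nat.choose_self, Nat.cast_one, pow_succ, coeff_C_mul, coeff_succ_X_mul, coeff_one,
      Nat.add_eq_zero_iff, one_ne_zero, and_false, if_false]
    ring

lemma one_sub_mul_negBinomSeries_succ (z : R) (n : ℕ) :
    (1 - C z * X) * negBinomSeries z (n + 1) = negBinomSeries z n := by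
  ext (_ | a)
  · simp
  · simp only [sub_mul, one_mul, mul_assoc, map_sub, coeff_negBinomSeries, coeff_C_mul,
      coeff_succ_X_mul, show a + 1 + (n + 1) = a + (n + 1) + 1 by omega, Nat.choose_succ_succ,
      Nat.cast_add, pow_succ, show a + 1 + n = a + (n + 1) by omega]
    ring

noncomputable def delannoyCoeff (z c : R) (H : R⟦X⟧) (n m : ℕ) : R :=
  z ^ (n + 1) * coeff m (negBinomSeries z n * binomSeries c n * H)

lemma delannoyCoeff_succ_succ (z c : R) (H : R⟦X⟧) (n m : ℕ) :
    delannoyCoeff z c H (n + 1) (m + 1) = z * delannoyCoeff z c H (n + 1) m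
      + z * delannoyCoeff z c H n (m + 1) + c * z * delannoyCoeff z c H n m := by
  have key : (1 - C z * X) * (negBinomSeries z (n + 1) * binomSeries c (n + 1) * H)
      = (1 + C c * X) * (negBinomSeries z n * binomSeries c n * H) := by
    rw [binomSeries_succ, ← one_sub_mul_negBinomSeries_succ z n]
    ring
  have hcoeff := congrArg (coeff (m + 1)) key
  simp only [sub_mul, add_mul, one_mul, mul_assoc, map_sub, map_add, coeff_C_mul,
    coeff_succ_X_mul] at hcoeff
  simp only [delannoyCoeff, mul_assoc]
  linear_combination z ^ (n + 2) * hcoeff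

lemma delannoyCoeff_zero_right (z c : R) (H : R⟦X⟧) (n : ℕ) :
    delannoyCoeff z c H n 0 = z ^ (n + 1) * constantCoeff H := by
  simp [delannoyCoeff]

lemma delannoyCoeff_C_zero_left (z c a : R) (m : ℕ) :
    delannoyCoeff z c (C a) 0 m = a * z ^ (m + 1) := by
  rw [delannoyCoeff, binomSeries_zero, mul_one, coeff_mul_C, coeff_negBinomSeries, add_zero,
    Nat.choose_self, Nat.cast_one]
  ring

lemma delannoyCoeff_geom_zero_left {x y z c : R} (h : x * y = z * (x + y + c)) (m : ℕ) :
    delannoyCoeff z c (C (x + c) * negBinomSeries x 0) 0 m = x ^ (m + 1) * y - y * z ^ (m + 1) := by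
  have hx := one_sub_mul_negBinomSeries_zero x
  have hz := one_sub_mul_negBinomSeries_zero z
  have hC : C x * C y = C z * (C x + C y + C c) := by simp only [← map_mul, ← map_add, h]
  have key : C z * (negBinomSeries z 0 * (C (x + c) * negBinomSeries x 0))
      = C (x * y) * negBinomSeries x 0 - C (y * z) * negBinomSeries z 0 := by
    simp only [map_add, map_mul]
    linear_combination (-(negBinomSeries x 0 * negBinomSeries z 0)) * hC
      + C x * C y * negBinomSeries x 0 * hz - C y * C z * negBinomSeries z 0 * hx
  rw [delannoyCoeff, binomSeries_zero, mul_one, zero_add, pow_one, ← coeff_C_mul, key]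
  simp only [map_sub, coeff_C_mul, coeff_negBinomSeries, add_zero, Nat.choose_self, Nat.cast_one,
    one_mul]
  ring

lemma eq_of_delannoy_rec {z c : R} {P Q : ℕ → ℕ → R}
    (hP : ∀ m n, P (m + 1) (n + 1) = z * P (m + 1) n + z * P m (n + 1) + c * z * P m n)
    (hQ : ∀ m n, Q (m + 1) (n + 1) = z * Q (m + 1) n + z * Q m (n + 1) + c * z * Q m n)
    (hP₀ : ∀ m, P m 0 = Q m 0) (hQ₀ : ∀ n, P 0 n = Q 0 n) : ∀ m n, P m n = Q m n := by
  intro m n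
  induction m generalizing n with
  | zero => exact hQ₀ n
  | succ m ihm =>
    induction n with
    | zero => exact hP₀ _
    | succ n ihn => rw [hP, hQ, ihn, ihm, ihm]

theorem pow_succ_mul_pow_succ_eq_delannoyCoeff {x y z c : R} (h : x * y = z * (x + y + c))
    (m n : ℕ) :
    x ^ (m + 1) * y ^ (n + 1) = delannoyCoeff z c (C (x + c) * negBinomSeries x 0) n m
      + delannoyCoeff z c (C (y + c) * negBinomSeries y 0) m n
      - delannoyCoeff z c (C c) n m := by
  revert m n
  refine eq_of_delannoy_rec (z := z) (c := c) (fun m n => ?_) (fun m n => ?_) (fun m => ?_)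
    (fun n => ?_)
  · linear_combination x ^ (m + 1) * y ^ (n + 1) * h
  · simp only [delannoyCoeff_succ_succ]
    ring
  · rw [delannoyCoeff_zero_right, delannoyCoeff_geom_zero_left h, delannoyCoeff_C_zero_left]
    simp only [map_mul, constantCoeff_C, constantCoeff_negBinomSeries]
    ring
  · rw [delannoyCoeff_zero_right, delannoyCoeff_geom_zero_left (y := x) (by linear_combination h),
      delannoyCoeff_zero_right]
    simp only [map_mul, constantCoeff_C, constantCoeff_negBinomSeries]
    ring

def partialFracTail (x z c : R) (r s : ℕ) : R :=
  ∑ a ∈ range r, ∑ b ∈ range (r - a), ((a + s - 1).choose a * (s - 1).choose b : R) * c ^ b *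
    (z ^ (s + a) * (x ^ (r - a - b - 1) * (x + c)))

def partialFracDiag (z c : R) (r s : ℕ) : R :=
  ∑ j ∈ Icc 1 (min r s), ((r + s - j - 1).choose (r - j) * (s - 1).choose (s - j) : R) * c ^ j *
    z ^ (r + s - j)

lemma partialFracTail_succ_succ (x z c : R) (m n : ℕ) :
    partialFracTail x z c (m + 1) (n + 1)
      = delannoyCoeff z c (C (x + c) * negBinomSeries x 0) n m := by
  have hassoc : negBinomSeries z n * binomSeries c n * (C (x + c) * negBinomSeries x 0)
      = C (x + c) * (negBinomSeries z n * (binomSeries c n * negBinomSeries x 0)) := by ring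
  rw [delannoyCoeff, hassoc, coeff_C_mul]
  simp only [coeff_mul, Nat.sum_antidiagonal_eq_sum_range_succ_mk, mul_sum]
  refine sum_congr rfl fun a ha => ?_
  have ha : a ≤ m := Nat.lt_succ_iff.mp (mem_range.mp ha)
  rw [show m + 1 - a = (m - a).succ by omega]
  refine sum_congr rfl fun b hb => ?_
  have hb : b ≤ m - a := Nat.lt_succ_iff.mp (mem_range.mp hb)
  rw [show a + (n + 1) - 1 = a + n by omega, show (m - a).succ - b - 1 = m - a - b by omega]
  simp only [coeff_negBinomSeries, coeff_binomSeries, add_zero, Nat.choose_self, Nat.cast_one,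
    Nat.add_sub_cancel]
  ring

lemma partialFracDiag_succ_succ (z c : R) (m n : ℕ) :
    partialFracDiag z c (m + 1) (n + 1) = delannoyCoeff z c (C c) n m := by
  rw [delannoyCoeff, mul_comm (negBinomSeries z n), mul_comm _ (C c), coeff_C_mul]
  simp only [coeff_mul, Nat.sum_antidiagonal_eq_sum_range_succ_mk, mul_sum]
  rw [partialFracDiag, show min (m + 1) (n + 1) = min m n + 1 by omega, ← Ico_add_one_right_eq_Icc,
    sum_Ico_eq_sum_range, Nat.add_sub_cancel]
  have hsub : range (min m n + 1) ⊆ range m.succ := range_subset_range.2 (by omega)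
  rw [← sum_subset hsub fun i _ hi => ?_]
  · refine sum_congr rfl fun i hi => ?_
    have hi : i ≤ min m n := Nat.lt_succ_iff.mp (mem_range.mp hi)
    rw [show m + 1 + (n + 1) - (1 + i) - 1 = m - i + n by omega,
      show m + 1 - (1 + i) = m - i by omega, show n + 1 - (1 + i) = n - i by omega,
      show m + 1 + (n + 1) - (1 + i) = n + 1 + (m - i) by omega, Nat.add_sub_cancel,
      Nat.choose_symm (by omega), coeff_binomSeries, coeff_negBinomSeries]
    ring
  · have hi : n < i := by simp only [mem_range] at *; omega
    simp [Nat.choose_eq_zero_of_lt hi]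

theorem pow_mul_pow_eq_partialFrac {x y z c : R} (h : x * y = z * (x + y + c))
    {r s : ℕ} (hr : 0 < r) (hs : 0 < s) :
    x ^ r * y ^ s
      = partialFracTail x z c r s + partialFracTail y z c s r - partialFracDiag z c r s := by
  obtain ⟨m, rfl⟩ := Nat.exists_eq_add_one.2 hr
  obtain ⟨n, rfl⟩ := Nat.exists_eq_add_one.2 hs
  rw [partialFracTail_succ_succ, partialFracTail_succ_succ, partialFracDiag_succ_succ]
  exact pow_succ_mul_pow_succ_eq_delannoyCoeff h m n

end PartialFractions

section QAnalog

variable {q : ℝ}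

noncomputable def qWeight (q : ℝ) (n : ℕ) : ℝ := q ^ n / qa q n

lemma qa_nonneg (hq : 1 < q) (n : ℕ) : 0 ≤ qa q n :=
  div_nonneg (sub_nonneg.2 (one_le_pow₀ hq.le)) (sub_nonneg.2 hq.le)

lemma qa_pos (hq : 1 < q) {n : ℕ} (hn : 0 < n) : 0 < qa q n :=
  div_pos (sub_pos.2 (one_lt_pow₀ hq hn.ne')) (sub_pos.2 hq)

lemma qWeight_pos (hq : 1 < q) {n : ℕ} (hn : 0 < n) : 0 < qWeight q n :=
  div_pos (pow_pos (by linarith) n) (qa_pos hq hn)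

lemma qWeight_div_pow (hq : 1 < q) {n : ℕ} (hn : 0 < n) :
    qWeight q n / q ^ n = qWeight q n + (1 - q) := by
  have h₁ : q ^ n - 1 ≠ 0 := (sub_pos.2 (one_lt_pow₀ hq hn.ne')).ne'
  have h₂ : q - 1 ≠ 0 := (sub_pos.2 hq).ne'
  have h₃ : q ^ n ≠ 0 := (pow_pos (by linarith) n).ne'
  simp only [qWeight, qa]
  field_simp
  ring

lemma qWeight_add (hq : 1 < q) {i j : ℕ} (hi : 0 < i) (hj : 0 < j) :
    qWeight q i * qWeight q j = qWeight q (i + j) * (qWeight q i + qWeight q j + (1 - q)) := by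
  have h₁ : q ^ i - 1 ≠ 0 := (sub_pos.2 (one_lt_pow₀ hq hi.ne')).ne'
  have h₂ : q ^ j - 1 ≠ 0 := (sub_pos.2 (one_lt_pow₀ hq hj.ne')).ne'
  have h₃ : q ^ i * q ^ j - 1 ≠ 0 := by
    rw [← pow_add]; exact (sub_pos.2 (one_lt_pow₀ hq (by omega))).ne'
  have h₄ : q - 1 ≠ 0 := (sub_pos.2 hq).ne'
  simp only [qWeight, qa, pow_add]
  field_simp
  ring

lemma qWeight_mem_Icc (hq : 1 < q) {n : ℕ} (hn : 0 < n) : qWeight q n ∈ Set.Icc (q - 1) q := by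
  have h₁ : 1 < q ^ n := one_lt_pow₀ hq hn.ne'
  have h₂ : q ≤ q ^ n := le_self_pow₀ hq.le hn.ne'
  rw [qWeight, qa, div_div_eq_mul_div]
  constructor
  · rw [le_div_iff₀ (by linarith)]; nlinarith
  · rw [div_le_iff₀ (by linarith)]; nlinarith

lemma rpow_div_qa_rpow (hq : 1 < q) (A : ℝ) (n : ℕ) :
    q ^ ((A - 1) * n) / qa q n ^ A = qWeight q n ^ A / q ^ n := by
  have hq₀ : 0 < q := by linarith
  rw [qWeight, Real.div_rpow (by positivity) (qa_nonneg hq n), ← Real.rpow_natCast,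
    ← Real.rpow_mul hq₀.le, div_right_comm, ← Real.rpow_sub hq₀]
  congr 2
  ring

lemma exists_qWeight_rpow_div_pow_le (hq : 1 < q) (A : ℝ) :
    ∃ K, 0 ≤ K ∧ ∀ n, 0 < n → qWeight q n ^ A / q ^ n ≤ K * q⁻¹ ^ n := by
  refine ⟨max ((q - 1) ^ A) (q ^ A), le_max_of_le_right (by positivity), fun n hn => ?_⟩
  obtain ⟨hlo, hhi⟩ := qWeight_mem_Icc hq hn
  rw [div_eq_mul_inv, ← inv_pow]
  refine mul_le_mul_of_nonneg_right ?_ (by positivity)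
  rcases le_or_gt 0 A with hA | hA
  · exact le_max_of_le_right (Real.rpow_le_rpow (qWeight_pos hq hn).le hhi hA)
  · exact le_max_of_le_left (Real.rpow_le_rpow_of_nonpos (by linarith) hlo hA.le)

lemma summable_qzeta_terms (hq : 1 < q) (p : ℝ) (w : ℕ) :
    Summable fun x : ℕ × ℕ =>
      qWeight q (x.1 + x.2 + 2) ^ p / q ^ (x.1 + x.2 + 2) *
        (qWeight q (x.2 + 1) ^ w / q ^ (x.2 + 1)) := by
  obtain ⟨K, hK, hbound⟩ := exists_qWeight_rpow_div_pow_le hq p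
  obtain ⟨L, hL, hbound'⟩ := exists_qWeight_rpow_div_pow_le hq w
  have hρ₀ : 0 ≤ q⁻¹ := by positivity
  have hρ₁ : q⁻¹ ≤ 1 := inv_le_one_of_one_le₀ hq.le
  refine summable_of_le_geometric_add hρ₀ (inv_lt_one_of_one_lt₀ hq)
    (fun x => mul_nonneg (div_nonneg (Real.rpow_nonneg (qWeight_pos hq (by omega)).le _)
      (by positivity)) (div_nonneg (pow_nonneg (qWeight_pos hq (by omega)).le _) (by positivity)))
    (C := K * L) fun ⟨i, j⟩ => ?_
  have h₁ := hbound (i + j + 2) (by omega)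
  have h₂ := hbound' (j + 1) (by omega)
  rw [Real.rpow_natCast] at h₂
  calc _ ≤ K * q⁻¹ ^ (i + j + 2) * (L * q⁻¹ ^ (j + 1)) :=
        mul_le_mul h₁ h₂ (div_nonneg (pow_nonneg (qWeight_pos hq (by omega)).le _) (by positivity))
          (by positivity)
    _ = K * L * q⁻¹ ^ (i + j) * q⁻¹ ^ (j + 3) := by ring
    _ ≤ K * L * q⁻¹ ^ (i + j) := mul_le_of_le_one_right (by positivity) (pow_le_one₀ hρ₀ hρ₁)

lemma summable_qphi_terms (hq : 1 < q) (W : ℝ) :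
    Summable fun x : ℕ × ℕ => qWeight q (x.1 + x.2 + 2) ^ W / q ^ (x.1 + x.2 + 2) := by
  obtain ⟨K, hK, hbound⟩ := exists_qWeight_rpow_div_pow_le hq W
  have hρ₀ : 0 ≤ q⁻¹ := by positivity
  refine summable_of_le_geometric_add hρ₀ (inv_lt_one_of_one_lt₀ hq)
    (fun x => div_nonneg (Real.rpow_nonneg (qWeight_pos hq (by omega)).le _) (by positivity))
    (C := K) fun x => (hbound _ (by omega)).trans ?_
  exact mul_le_mul_of_nonneg_left (pow_le_pow_of_le_one hρ₀ (inv_le_one_of_one_le₀ hq.le)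
    (by omega)) hK

lemma hasSum_qzeta (hq : 1 < q) (p : ℝ) (w : ℕ) :
    HasSum (fun x : ℕ × ℕ =>
      qWeight q (x.1 + x.2 + 2) ^ p / q ^ (x.1 + x.2 + 2) *
        (qWeight q (x.2 + 1) ^ w / q ^ (x.2 + 1)))
      (qzeta q p w) := by
  have hsum := summable_qzeta_terms hq p w
  convert hsum.hasSum using 1
  rw [hsum.tsum_prod' hsum.prod_factor, qzeta]
  refine tsum_congr fun i => tsum_congr fun j => ?_
  have hq₀ : 0 < q := by linarith
  have h₁ := rpow_div_qa_rpow hq p (i + j + 2)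
  have h₂ := rpow_div_qa_rpow hq w (j + 1)
  push_cast at h₁ h₂
  rw [Real.rpow_natCast, Real.rpow_natCast] at h₂
  rw [Real.rpow_add hq₀, mul_div_mul_comm, h₁, h₂]

lemma hasSum_qphi (hq : 1 < q) (W : ℝ) :
    HasSum (fun x : ℕ × ℕ => qWeight q (x.1 + x.2 + 2) ^ W / q ^ (x.1 + x.2 + 2)) (qphi q W) := by
  have hsum := summable_qphi_terms hq W
  have hphi : HasSum (fun n : ℕ => (n : ℝ) * q ^ ((W - 1) * ((n : ℝ) + 1)) / qa q (n + 1) ^ W)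
      (∑' x : ℕ × ℕ, qWeight q (x.1 + x.2 + 2) ^ W / q ^ (x.1 + x.2 + 2)) := by
    refine (hasSum_nat_add_iff' 1).1 ?_
    rw [sum_range_one, Nat.cast_zero, zero_mul, zero_div, sub_zero]
    refine (hsum.hasSum.succ_nsmul_of_comp_add
      (f := fun d => qWeight q (d + 2) ^ W / q ^ (d + 2))).congr_fun fun n => ?_
    have h := rpow_div_qa_rpow hq W (n + 2)
    push_cast at h ⊢
    rw [mul_div_assoc, show (n : ℝ) + 1 + 1 = n + 2 by ring, h, nsmul_eq_mul]
    push_cast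
    ring
  rw [qphi, hphi.tsum_eq]
  exact hsum.hasSum

lemma tornheim_term_eq (hq : 1 < q) (r s : ℕ) (t : ℝ) (u v : ℕ) :
    q ^ (((r : ℝ) + t - 1) * ((u : ℝ) + 1) + ((s : ℝ) + t - 1) * ((v : ℝ) + 1)) /
        (qa q (u + 1) ^ r * qa q (v + 1) ^ s * qa q (u + v + 2) ^ t)
      = qWeight q (u + v + 2) ^ t / q ^ (u + v + 2) *
          (qWeight q (u + 1) ^ r * qWeight q (v + 1) ^ s) := by
  have hq₀ : 0 < q := by linarith
  have h₁ := rpow_div_qa_rpow hq r (u + 1)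
  have h₂ := rpow_div_qa_rpow hq s (v + 1)
  have h₃ := rpow_div_qa_rpow hq t (u + v + 2)
  simp only [Real.rpow_natCast] at h₁ h₂
  rw [show ((r : ℝ) + t - 1) * ((u : ℝ) + 1) + ((s : ℝ) + t - 1) * ((v : ℝ) + 1)
      = (r - 1) * ((u + 1 : ℕ) : ℝ) + (s - 1) * ((v + 1 : ℕ) : ℝ) + (t - 1) * ((u + v + 2 : ℕ) : ℝ)
        + ((u + v + 2 : ℕ) : ℝ) by push_cast; ring,
    Real.rpow_add hq₀, Real.rpow_add hq₀, Real.rpow_add hq₀, Real.rpow_natCast]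
  calc _ = q ^ ((r - 1) * ((u + 1 : ℕ) : ℝ)) / qa q (u + 1) ^ r
        * (q ^ ((s - 1) * ((v + 1 : ℕ) : ℝ)) / qa q (v + 1) ^ s)
        * (q ^ ((t - 1) * ((u + v + 2 : ℕ) : ℝ)) / qa q (u + v + 2) ^ t) * q ^ (u + v + 2) := by
        ring
    _ = _ := by
        rw [h₁, h₂, h₃]
        field_simp
        ring

lemma hasSum_zetaBlock (hq : 1 < q) (t : ℝ) (r s : ℕ) :
    HasSum (fun x : ℕ × ℕ => qWeight q (x.1 + x.2 + 2) ^ t / q ^ (x.1 + x.2 + 2) *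
        partialFracTail (qWeight q (x.2 + 1)) (qWeight q (x.1 + x.2 + 2)) (1 - q) r s)
      (∑ a ∈ range r, ∑ b ∈ range (r - a), ((a + s - 1).choose a * (s - 1).choose b : ℝ) *
        (1 - q) ^ b * qzeta q ((s : ℝ) + t + a) (r - a - b)) := by
  refine (hasSum_sum fun a _ => hasSum_sum fun b _ => (hasSum_qzeta hq _ _).mul_left _).congr_fun
    fun ⟨i, j⟩ => ?_
  rw [partialFracTail, mul_sum]
  refine sum_congr rfl fun a _ => ?_
  rw [mul_sum]
  refine sum_congr rfl fun b hb => ?_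
  have hw : qWeight q (j + 1) ^ (r - a - b) / q ^ (j + 1)
      = qWeight q (j + 1) ^ (r - a - b - 1) * (qWeight q (j + 1) + (1 - q)) := by
    rw [← qWeight_div_pow hq j.succ_pos, ← mul_div_assoc, ← pow_succ,
      Nat.sub_add_cancel (by have := mem_range.1 hb; omega)]
  dsimp only
  rw [show (s : ℝ) + t + a = t + ((s + a : ℕ) : ℝ) by push_cast; ring,
    Real.rpow_add (qWeight_pos hq (by omega)), Real.rpow_natCast, hw]
  ring

lemma hasSum_phiBlock (hq : 1 < q) (t : ℝ) (r s : ℕ) :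
    HasSum (fun x : ℕ × ℕ => qWeight q (x.1 + x.2 + 2) ^ t / q ^ (x.1 + x.2 + 2) *
        partialFracDiag (qWeight q (x.1 + x.2 + 2)) (1 - q) r s)
      (∑ j ∈ Icc 1 (min r s), ((r + s - j - 1).choose (r - j) * (s - 1).choose (s - j) : ℝ) *
        (1 - q) ^ j * qphi q ((r : ℝ) + (s : ℝ) + t - j)) := by
  refine (hasSum_sum fun j _ => (hasSum_qphi hq _).mul_left _).congr_fun fun x => ?_
  rw [partialFracDiag, mul_sum]
  refine sum_congr rfl fun j hj => ?_
  have hj : j ≤ min r s := (mem_Icc.1 hj).2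
  rw [show (r : ℝ) + s + t - j = t + ((r + s - j : ℕ) : ℝ) by
      rw [Nat.cast_sub (by omega)]; push_cast; ring,
    Real.rpow_add (qWeight_pos hq (by omega)), Real.rpow_natCast]
  ring

lemma hasSum_tornheim (hq : 1 < q) {r s : ℕ} (hr : 0 < r) (hs : 0 < s) (t : ℝ) :
    HasSum (fun x : ℕ × ℕ =>
        q ^ (((r : ℝ) + t - 1) * ((x.1 : ℝ) + 1) + ((s : ℝ) + t - 1) * ((x.2 : ℝ) + 1)) /
          (qa q (x.1 + 1) ^ r * qa q (x.2 + 1) ^ s * qa q (x.1 + x.2 + 2) ^ t))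
      ((∑ a ∈ range r, ∑ b ∈ range (r - a), ((a + s - 1).choose a * (s - 1).choose b : ℝ) *
          (1 - q) ^ b * qzeta q ((s : ℝ) + t + a) (r - a - b))
        + (∑ a ∈ range s, ∑ b ∈ range (s - a), ((a + r - 1).choose a * (r - 1).choose b : ℝ) *
          (1 - q) ^ b * qzeta q ((r : ℝ) + t + a) (s - a - b))
        - (∑ j ∈ Icc 1 (min r s), ((r + s - j - 1).choose (r - j) * (s - 1).choose (s - j) : ℝ) *
          (1 - q) ^ j * qphi q ((r : ℝ) + (s : ℝ) + t - j))) := by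
  have hswap := (Equiv.prodComm ℕ ℕ).hasSum_iff.2 (hasSum_zetaBlock hq t r s)
  refine ((hswap.add (hasSum_zetaBlock hq t s r)).sub (hasSum_phiBlock hq t r s)).congr_fun
    fun ⟨u, v⟩ => ?_
  have hrel := qWeight_add hq (i := u + 1) (j := v + 1) (by omega) (by omega)
  rw [show u + 1 + (v + 1) = u + v + 2 by omega] at hrel
  simp only [Function.comp_apply, Equiv.prodComm_apply, Prod.fst_swap, Prod.snd_swap]
  rw [tornheim_term_eq hq, show v + u + 2 = u + v + 2 by omega, ← mul_add, ← mul_sub,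
    ← pow_mul_pow_eq_partialFrac hrel hr hs]

end QAnalog

theorem stmt19 (q : ℝ) (hq : 1 < q) (r s : ℕ) (hr : 0 < r) (hs : 0 < s) (t : ℝ) :
    (∑' (u : ℕ) (v : ℕ),
        q ^ (((r : ℝ) + t - 1) * ((u : ℝ) + 1) + ((s : ℝ) + t - 1) * ((v : ℝ) + 1)) /
          (qa q (u + 1) ^ r * qa q (v + 1) ^ s * qa q (u + v + 2) ^ t)) =
      (∑ a ∈ Finset.range r, ∑ b ∈ Finset.range (r - a),
        ((a + s - 1).choose a * (s - 1).choose b : ℝ) * (1 - q) ^ b *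
          qzeta q ((s : ℝ) + t + a) (r - a - b))
      + (∑ a ∈ Finset.range s, ∑ b ∈ Finset.range (s - a),
        ((a + r - 1).choose a * (r - 1).choose b : ℝ) * (1 - q) ^ b *
          qzeta q ((r : ℝ) + t + a) (s - a - b))
      - (∑ j ∈ Finset.Icc 1 (min r s),
        ((r + s - j - 1).choose (r - j) * (s - 1).choose (s - j) : ℝ) * (1 - q) ^ j *
          qphi q ((r : ℝ) + (s : ℝ) + t - j)) := by
  have h := hasSum_tornheim hq hr hs t
  exact (h.summable.tsum_prod' h.summable.prod_factor).symm.trans h.tsum_eq
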